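/- arXiv:2007.06538 — 4 statements merged into one kernel-verified Lean document; each statement's English description precedes it below -/
import Mathlib

section
/- Let n, m ≥ 1, aπ ∈ W_n and bτ ∈ W_m with aπ ⊥ bτ. Then the centralizer of aπ # bτ in W_{n+m} equals { uσ # vη : uσ lies in the centralizer of aπ in W_n and vη lies in the centralizer of bτ in W_m }. -/
/-- The action of a permutation `σ ∈ S_n` on a vector `a ∈ (ℤ/2)^n`:
`(σ · a)_i = a_{σ⁻¹ i}`. -/
def permAct {n : ℕ} (σ : Equiv.Perm (Fin n)) (a : Fin n → ZMod 2) : Fin n → ZMod 2 :=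
  fun i => a (σ⁻¹ i)

/-- The underlying set of the hyperoctahedral group `W n = (ℤ/2)^n ⋊ S_n`. -/
@[ext]
structure W (n : ℕ) where
  vec : Fin n → ZMod 2
  perm : Equiv.Perm (Fin n)

/-- Group structure of `W n`: `(a,σ)(b,μ) = (a + σ·b, σμ)`. -/
instance (n : ℕ) : Group (W n) where
  mul x y := ⟨x.vec + permAct x.perm y.vec, x.perm * y.perm⟩
  one := ⟨0, 1⟩
  inv x := ⟨permAct x.perm⁻¹ (-x.vec), x.perm⁻¹⟩
  mul_assoc x y z := by
    refine W.ext ?_ ?_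
    · show (x.vec + permAct x.perm y.vec) + permAct (x.perm * y.perm) z.vec
        = x.vec + permAct x.perm (y.vec + permAct y.perm z.vec)
      funext i
      simp [permAct, mul_inv_rev, Equiv.Perm.mul_apply, add_assoc]
    · exact mul_assoc _ _ _
  one_mul x := by
    refine W.ext ?_ ?_
    · show (0 : Fin n → ZMod 2) + permAct 1 x.vec = x.vec
      funext i; simp [permAct]
    · exact one_mul _
  mul_one x := by
    refine W.ext ?_ ?_
    · show x.vec + permAct x.perm 0 = x.vec
      funext i; simp [permAct]
    · exact mul_one _
  inv_mul_cancel x := by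
    refine W.ext ?_ ?_
    · show permAct x.perm⁻¹ (-x.vec) + permAct x.perm⁻¹ x.vec = 0
      funext i; simp [permAct, CharTwo.add_self_eq_zero]
    · exact inv_mul_cancel _

@[simp] theorem W.mul_vec {n : ℕ} (x y : W n) :
    (x * y).vec = x.vec + permAct x.perm y.vec := rfl
@[simp] theorem W.mul_perm {n : ℕ} (x y : W n) :
    (x * y).perm = x.perm * y.perm := rfl
@[simp] theorem W.one_vec {n : ℕ} : (1 : W n).vec = 0 := rfl
@[simp] theorem W.one_perm {n : ℕ} : (1 : W n).perm = 1 := rfl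
@[simp] theorem W.inv_vec {n : ℕ} (x : W n) :
    (x⁻¹).vec = permAct x.perm⁻¹ (-x.vec) := rfl
@[simp] theorem W.inv_perm {n : ℕ} (x : W n) : (x⁻¹).perm = x.perm⁻¹ := rfl

/-- Conjugation `x ▷ y = x y x⁻¹` in a group. -/
def conjAct' {G : Type*} [Group G] (x y : G) : G := x * y * x⁻¹

/-- `sq(x,y) = x ▷ (y ▷ (x ▷ y))`. -/
def sqD {G : Type*} [Group G] (x y : G) : G := conjAct' x (conjAct' y (conjAct' x y))

/-- Conjugacy class of `x` in the group `G`. -/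
def conjClass {G : Type*} [Group G] (x : G) : Set G := {y | ∃ t : G, y = t * x * t⁻¹}

/-- A subset `O` of a group is of type D. -/
def IsTypeD {G : Type*} [Group G] (O : Set G) : Prop :=
  ∃ R S : Set G, R ⊆ O ∧ S ⊆ O ∧ R.Nonempty ∧ S.Nonempty ∧ Disjoint R S ∧
    (∀ r ∈ R, ∀ r' ∈ R, conjAct' r r' ∈ R) ∧
    (∀ s ∈ S, ∀ s' ∈ S, conjAct' s s' ∈ S) ∧
    (∀ r ∈ R, ∀ s ∈ S, conjAct' r s ∈ S ∧ conjAct' s r ∈ R) ∧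
    (∃ a ∈ R, ∃ b ∈ S, sqD a b ≠ b)

/-- The subgroup `K_n ⋊ S_n` of `W n`, where `K_n = {a : a_1 + ⋯ + a_n = 0}`. -/
def Ksub (n : ℕ) : Subgroup (W n) where
  carrier := {x | ∑ i, x.vec i = 0}
  one_mem' := by simp
  mul_mem' := by
    intro x y hx hy
    simp only [Set.mem_setOf_eq] at *
    rw [W.mul_vec]
    simp only [Pi.add_apply, Finset.sum_add_distrib, hx, zero_add, permAct]
    rw [Equiv.sum_comp x.perm⁻¹ y.vec]
    exact hy
  inv_mem' := by
    intro x hx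
    simp only [Set.mem_setOf_eq] at *
    rw [W.inv_vec]
    simp only [permAct, inv_inv, Pi.neg_apply]
    rw [Finset.sum_neg_distrib, Equiv.sum_comp x.perm x.vec, hx, neg_zero]
/-- Juxtaposition of permutations: `(π#τ)(i) = π(i)` for `i < n`, `(π#τ)(n+j) = n + τ(j)`. -/
def pjux {n m : ℕ} (π : Equiv.Perm (Fin n)) (τ : Equiv.Perm (Fin m)) :
    Equiv.Perm (Fin (n + m)) :=
  finSumFinEquiv.permCongr (Equiv.sumCongr π τ)

/-- Juxtaposition `aπ # bτ = (a#b, π#τ) ∈ W (n+m)`. -/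
def wjux {n m : ℕ} (x : W n) (y : W m) : W (n + m) :=
  ⟨Fin.append x.vec y.vec, pjux x.perm y.perm⟩

/-- `aπ ⊥ bτ`: every cycle length (orbit size) of `π` differs from every cycle
length of `τ`. -/
def orthogonal {n m : ℕ} (π : Equiv.Perm (Fin n)) (τ : Equiv.Perm (Fin m)) : Prop :=
  ∀ (i : Fin n) (j : Fin m),
    Function.minimalPeriod (⇑π) i ≠ Function.minimalPeriod (⇑τ) j


/-! The permutation part `σ` of an element commuting with `aπ # bτ` commutes with `π # τ`,
hence preserves the cycle length of every point. By orthogonality `σ` maps `{1, …, n}` into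
itself, so `σ = σ₁ # σ₂` and the element is a juxtaposition. Juxtaposition is an injective
homomorphism `W n × W m → W (n + m)`, so a juxtaposition commutes with `aπ # bτ` exactly when
its halves commute with `aπ` and `bτ`. -/

open Function

theorem Function.Semiconj.minimalPeriod_eq {α β : Type*} {fa : α → α} {fb : β → β} {g : α → β}
    (h : Semiconj g fa fb) (hg : Injective g) (x : α) :
    minimalPeriod fb (g x) = minimalPeriod fa x :=
  minimalPeriod_eq_minimalPeriod_iff.2 fun _ =>
    ⟨fun hx => hg <| (h.iterate_right _ x).trans hx, fun hx => hx.map h⟩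

namespace Equiv.Perm

variable {α β : Type*}

theorem minimalPeriod_apply_of_commute {ρ p : Perm α} (h : Commute ρ p) (a : α) :
    minimalPeriod p (ρ a) = minimalPeriod p a :=
  Semiconj.minimalPeriod_eq (fun b => DFunLike.congr_fun h.eq b) ρ.injective a

@[simp]
theorem minimalPeriod_sumCongr_inl (π : Perm α) (τ : Perm β) (a : α) :
    minimalPeriod (sumCongr π τ) (Sum.inl a) = minimalPeriod π a :=
  Semiconj.minimalPeriod_eq (g := Sum.inl) (fa := π) (fun _ => rfl) Sum.inl_injective a

@[simp]
theorem minimalPeriod_sumCongr_inr (π : Perm α) (τ : Perm β) (b : β) :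
    minimalPeriod (sumCongr π τ) (Sum.inr b) = minimalPeriod τ b :=
  Semiconj.minimalPeriod_eq (g := Sum.inr) (fa := τ) (fun _ => rfl) Sum.inr_injective b

theorem exists_eq_sumCongr_of_commute [Finite α] [Finite β] {π : Perm α} {τ : Perm β}
    (horth : ∀ a b, minimalPeriod π a ≠ minimalPeriod τ b) {ρ : Perm (α ⊕ β)}
    (h : Commute ρ (sumCongr π τ)) : ∃ σ η, ρ = sumCongr σ η := by
  have hmaps : Set.MapsTo ρ (Set.range Sum.inl) (Set.range Sum.inl) := by
    rintro _ ⟨a, rfl⟩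
    rcases hρ : ρ (Sum.inl a) with a' | b
    · exact ⟨a', rfl⟩
    · have := minimalPeriod_apply_of_commute h (Sum.inl a)
      rw [hρ, minimalPeriod_sumCongr_inl, minimalPeriod_sumCongr_inr] at this
      exact absurd this.symm (horth a b)
  obtain ⟨⟨σ, η⟩, hση⟩ := mem_sumCongrHom_range_of_perm_mapsTo_inl hmaps
  exact ⟨σ, η, hση.symm⟩

end Equiv.Perm

section Juxtaposition

variable {n m : ℕ}

@[simp]
theorem pjux_apply_castAdd (π : Equiv.Perm (Fin n)) (τ : Equiv.Perm (Fin m)) (i : Fin n) :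
    pjux π τ (Fin.castAdd m i) = Fin.castAdd m (π i) := by
  simp [pjux]

@[simp]
theorem pjux_apply_natAdd (π : Equiv.Perm (Fin n)) (τ : Equiv.Perm (Fin m)) (j : Fin m) :
    pjux π τ (Fin.natAdd n j) = Fin.natAdd n (τ j) := by
  simp [pjux]

theorem pjux_mul_pjux (π σ : Equiv.Perm (Fin n)) (τ η : Equiv.Perm (Fin m)) :
    pjux π τ * pjux σ η = pjux (π * σ) (τ * η) := by
  rw [pjux, pjux, pjux, ← Equiv.permCongr_mul, Equiv.Perm.sumCongr_mul]

theorem pjux_one : pjux (1 : Equiv.Perm (Fin n)) (1 : Equiv.Perm (Fin m)) = 1 := by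
  ext k
  simp [pjux]

theorem pjux_inv (π : Equiv.Perm (Fin n)) (τ : Equiv.Perm (Fin m)) :
    (pjux π τ)⁻¹ = pjux π⁻¹ τ⁻¹ :=
  inv_eq_of_mul_eq_one_right <| by
    rw [pjux_mul_pjux, mul_inv_cancel, mul_inv_cancel, pjux_one]

theorem exists_eq_pjux_of_commute {π : Equiv.Perm (Fin n)} {τ : Equiv.Perm (Fin m)}
    (horth : orthogonal π τ) {ρ : Equiv.Perm (Fin (n + m))} (h : Commute ρ (pjux π τ)) :
    ∃ σ η, ρ = pjux σ η := by
  have h' : Commute (finSumFinEquiv.symm.permCongr ρ) (Equiv.sumCongr π τ) := by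
    simpa [pjux, ← Equiv.permCongr_symm] using h.map finSumFinEquiv.permCongrHom.symm
  obtain ⟨σ, η, hση⟩ := Equiv.Perm.exists_eq_sumCongr_of_commute horth h'
  refine ⟨σ, η, ?_⟩
  change ρ = finSumFinEquiv.permCongr (Equiv.Perm.sumCongr σ η)
  rw [← hση, ← Equiv.permCongr_symm, Equiv.apply_symm_apply]

theorem permAct_pjux_append (σ : Equiv.Perm (Fin n)) (η : Equiv.Perm (Fin m))
    (a : Fin n → ZMod 2) (b : Fin m → ZMod 2) :
    permAct (pjux σ η) (Fin.append a b) = Fin.append (permAct σ a) (permAct η b) := by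
  funext k
  refine Fin.addCases (fun i => ?_) (fun j => ?_) k <;> simp [permAct, pjux_inv]

theorem wjux_mul_wjux (u x : W n) (v y : W m) :
    wjux u v * wjux x y = wjux (u * x) (v * y) := by
  refine W.ext ?_ (pjux_mul_pjux _ _ _ _)
  funext k
  refine Fin.addCases (fun i => ?_) (fun j => ?_) k <;> simp [wjux, permAct_pjux_append]

theorem wjux_inj {u x : W n} {v y : W m} : wjux u v = wjux x y ↔ u = x ∧ v = y := by
  refine ⟨fun h => ?_, fun ⟨hu, hv⟩ => hu ▸ hv ▸ rfl⟩
  have hvec := congrArg W.vec h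
  have hperm := congrArg W.perm h
  simp only [wjux] at hvec hperm
  refine ⟨W.ext ?_ ?_, W.ext ?_ ?_⟩
  · funext i; simpa using congrFun hvec (Fin.castAdd m i)
  · refine Equiv.ext fun i => ?_; simpa using congrArg (· (Fin.castAdd m i)) hperm
  · funext j; simpa using congrFun hvec (Fin.natAdd n j)
  · refine Equiv.ext fun j => ?_; simpa using congrArg (· (Fin.natAdd n j)) hperm

theorem exists_wjux_eq_of_perm_eq_pjux {z : W (n + m)} {σ : Equiv.Perm (Fin n)}
    {η : Equiv.Perm (Fin m)} (h : z.perm = pjux σ η) : ∃ u v, z = wjux u v :=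
  ⟨⟨fun i => z.vec (Fin.castAdd m i), σ⟩, ⟨fun j => z.vec (Fin.natAdd n j), η⟩,
    W.ext Fin.append_castAdd_natAdd.symm h⟩

end Juxtaposition

theorem centralizer_wjux_general (n m : ℕ) (x : W n) (y : W m)
    (horth : orthogonal x.perm y.perm) :
    {z : W (n + m) | z * wjux x y = wjux x y * z} =
      {z : W (n + m) | ∃ (u : W n) (v : W m),
        u * x = x * u ∧ v * y = y * v ∧ z = wjux u v} := by
  ext z
  constructor
  · intro hz
    have hperm : Commute z.perm (pjux x.perm y.perm) := congrArg W.perm hz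
    obtain ⟨σ, η, hση⟩ := exists_eq_pjux_of_commute horth hperm
    obtain ⟨u, v, rfl⟩ := exists_wjux_eq_of_perm_eq_pjux hση
    rw [Set.mem_ofPred_eq, wjux_mul_wjux, wjux_mul_wjux, wjux_inj] at hz
    exact ⟨u, v, hz.1, hz.2, rfl⟩
  · rintro ⟨u, v, hu, hv, rfl⟩
    rw [Set.mem_ofPred_eq, wjux_mul_wjux, wjux_mul_wjux, hu, hv]

/-- for orthogonal `aπ, bτ`, the centralizer of `aπ # bτ` in
`W (n+m)` is the juxtaposition of the two centralizers. -/
theorem centralizer_wjux (n m : ℕ) (hn : 1 ≤ n) (hm : 1 ≤ m) (x : W n) (y : W m)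
    (horth : orthogonal x.perm y.perm) :
    {z : W (n + m) | z * wjux x y = wjux x y * z} =
      {z : W (n + m) | ∃ (u : W n) (v : W m),
        u * x = x * u ∧ v * y = y * v ∧ z = wjux u v} :=
  centralizer_wjux_general n m x y horth
end

section
/- Let n, m ≥ 1, aτ ∈ W_n and bμ ∈ W_m. If the conjugacy class of aτ in W_n is of type D, then the conjugacy class of aτ # bμ in W_{n+m} is of type D. -/
/-!
Type D only involves the operation `▷`, so it is inherited along any injective map that
preserves `▷` and sends the first conjugacy class into the second. Both `z ↦ (z, bμ)` into
`W n × W m` and juxtaposition `W n × W m → W (n + m)`, an injective group homomorphism, are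
such maps.
-/

section TypeD

variable {G H : Type*} [Group G] [Group H]

theorem sqD_map {f : G → H} (hf : ∀ a b, f (conjAct' a b) = conjAct' (f a) (f b)) (a b : G) :
    sqD (f a) (f b) = f (sqD a b) := by
  simp only [sqD, hf]

theorem IsTypeD.of_image_subset {f : G → H} (hinj : Function.Injective f)
    (hf : ∀ a b, f (conjAct' a b) = conjAct' (f a) (f b)) {O : Set G} {O' : Set H}
    (hO : f '' O ⊆ O') (h : IsTypeD O) : IsTypeD O' := by
  obtain ⟨R, S, hRO, hSO, hR, hS, hdisj, hRR, hSS, hRS, a, ha, b, hb, hsq⟩ := h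
  refine ⟨f '' R, f '' S, (Set.image_mono hRO).trans hO, (Set.image_mono hSO).trans hO,
    hR.image f, hS.image f, (Set.disjoint_image_iff hinj).mpr hdisj, ?_, ?_, ?_,
    f a, ⟨a, ha, rfl⟩, f b, ⟨b, hb, rfl⟩, by rw [sqD_map hf]; exact hinj.ne hsq⟩
  · rintro _ ⟨r, hr, rfl⟩ _ ⟨r', hr', rfl⟩
    exact ⟨_, hRR r hr r' hr', hf r r'⟩
  · rintro _ ⟨s, hs, rfl⟩ _ ⟨s', hs', rfl⟩
    exact ⟨_, hSS s hs s' hs', hf s s'⟩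
  · rintro _ ⟨r, hr, rfl⟩ _ ⟨s, hs, rfl⟩
    exact ⟨⟨_, (hRS r hr s hs).1, hf r s⟩, ⟨_, (hRS r hr s hs).2, hf s r⟩⟩

theorem image_conjClass_subset (φ : G →* H) (g : G) : φ '' conjClass g ⊆ conjClass (φ g) := by
  rintro _ ⟨_, ⟨t, rfl⟩, rfl⟩
  exact ⟨φ t, by simp only [map_mul, map_inv]⟩

theorem IsTypeD.conjClass_map {φ : G →* H} (hφ : Function.Injective φ) {g : G}
    (h : IsTypeD (conjClass g)) : IsTypeD (conjClass (φ g)) :=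
  h.of_image_subset hφ (fun a b => by simp only [conjAct', map_mul, map_inv])
    (image_conjClass_subset φ g)

theorem IsTypeD.conjClass_prod_mk {g : G} (h : IsTypeD (conjClass g)) (k : H) :
    IsTypeD (conjClass (g, k)) := by
  refine h.of_image_subset (Prod.mk_left_injective k) (fun a b => ?_) ?_
  · ext <;> simp [conjAct']
  · rintro _ ⟨_, ⟨t, rfl⟩, rfl⟩
    exact ⟨(t, 1), by ext <;> simp⟩

end TypeD

section Juxtaposition

variable {n m : ℕ}

def pjuxHom (n m : ℕ) : Equiv.Perm (Fin n) × Equiv.Perm (Fin m) →* Equiv.Perm (Fin (n + m)) :=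
  finSumFinEquiv.permCongrHom.toMonoidHom.comp (Equiv.Perm.sumCongrHom _ _)

theorem pjuxHom_injective : Function.Injective (pjuxHom n m) :=
  finSumFinEquiv.permCongrHom.injective.comp Equiv.Perm.sumCongrHom_injective

theorem permAct_pjux (π : Equiv.Perm (Fin n)) (τ : Equiv.Perm (Fin m))
    (a : Fin n → ZMod 2) (b : Fin m → ZMod 2) :
    permAct (pjux π τ) (Fin.append a b) = Fin.append (permAct π a) (permAct τ b) := by
  have hinv : (pjux π τ)⁻¹ = pjux π⁻¹ τ⁻¹ := (map_inv (pjuxHom n m) (π, τ)).symm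
  funext i
  simp only [permAct, hinv]
  refine Fin.addCases (fun i => ?_) (fun j => ?_) i <;>
    simp [permAct, pjux, Equiv.permCongr_apply]

def wjuxHom (n m : ℕ) : W n × W m →* W (n + m) where
  toFun p := wjux p.1 p.2
  map_one' := by
    refine W.ext ?_ (map_one (pjuxHom n m))
    funext i
    refine Fin.addCases (fun i => ?_) (fun j => ?_) i <;> simp [wjux]
  map_mul' p q := by
    refine W.ext ?_ (map_mul (pjuxHom n m) (p.1.perm, p.2.perm) (q.1.perm, q.2.perm))
    simp only [wjux, W.mul_vec, Prod.fst_mul, Prod.snd_mul, permAct_pjux]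
    funext i
    refine Fin.addCases (fun i => ?_) (fun j => ?_) i <;> simp

theorem wjuxHom_injective : Function.Injective (wjuxHom n m) := by
  rintro ⟨x, y⟩ ⟨x', y'⟩ h
  have hvec : (x.vec, y.vec) = (x'.vec, y'.vec) :=
    (Fin.appendEquiv n m).injective (congrArg W.vec h)
  have hperm : (x.perm, y.perm) = (x'.perm, y'.perm) := pjuxHom_injective (congrArg W.perm h)
  simp only [Prod.mk.injEq] at hvec hperm ⊢
  exact ⟨W.ext hvec.1 hperm.1, W.ext hvec.2 hperm.2⟩

end Juxtaposition

theorem typeD_wjux_general (n m : ℕ) (x : W n) (y : W m)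
    (hx : IsTypeD (conjClass x)) :
    IsTypeD (conjClass (wjux x y)) :=
  (hx.conjClass_prod_mk y).conjClass_map wjuxHom_injective

/-- if the conjugacy class of `aτ` in `W n` is of type D, then so
is the conjugacy class of `aτ # bμ` in `W (n+m)`. -/
theorem typeD_wjux (n m : ℕ) (hn : 1 ≤ n) (hm : 1 ≤ m) (x : W n) (y : W m)
    (hx : IsTypeD (conjClass x)) :
    IsTypeD (conjClass (wjux x y)) :=
  typeD_wjux_general n m x y hx
end

section
/- Let p be odd with p ≥ 5, let n ≥ p, let τ ∈ S_n be the p-cycle (1 2 ⋯ p), and let a ∈ (ℤ/2)^n. Let H be either W_n or the subgroup K_n ⋊ S_n, and suppose (a,τ) ∈ H. Then the conjugacy class of (a,τ) in H is of type D. -/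
/-! Let `r = (a, τ)` and let `Q` be the subgroup of `H` of elements whose permutation part
commutes with `τ`. Since `τ` is a cycle of odd length, `γ τ γ⁻¹ = τ²` for some `γ`, and
`s = (0, γ) r (0, γ)⁻¹ = (c, τ²)`. Conjugation by `Q` does not change the permutation parts `τ` and
`τ²`, so the `Q`-classes `R` of `r` and `S` of `s` are disjoint; they lie in `Q`, hence are closed
under the conjugations required of a type D pair.

For commuting `σ, μ` and in characteristic 2, `sq((b, σ), (c, μ)) = (c, μ)` iff
`(1 + σμ)((1 + μ) b + (1 + σ) c) = 0`. Conjugating `r` by the vector `e_x + e_{τx}` (which lies in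
`K_n`) replaces `b = a` by `a + (1 + τ)² e_x` and changes the left side, for `σ = τ`, `μ = τ²`, by
`(1 + τ³)(1 + τ²)(1 + τ²) e_x = e_x + e_{τ³x} + e_{τ⁴x} + e_{τ⁷x}`, which is nonzero at `τ³x` as soon
as the orbit of `x` has at least five points. So `sq(r', s) ≠ s` for `r' = r` or its conjugate. -/

open Equiv

section TypeD

variable {G : Type*} [Group G]

theorem map_sqD {M : Type*} [Group M] (f : G →* M) (x y : G) :
    f (sqD x y) = sqD (f x) (f y) := by
  simp [sqD, conjAct']

theorem map_conj_of_commute {M : Type*} [Group M] (f : G →* M) {t z : G}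
    (h : Commute (f t) (f z)) : f (t * z * t⁻¹) = f z := by
  simp [h.eq]

theorem conjAct'_mem_image_conj (Q : Subgroup G) {r : G} (hr : r ∈ Q) {x w : G}
    (hw : w ∈ (fun t => t * x * t⁻¹) '' (Q : Set G)) :
    conjAct' r w ∈ (fun t => t * x * t⁻¹) '' (Q : Set G) := by
  obtain ⟨u, hu, rfl⟩ := hw
  exact ⟨r * u, Q.mul_mem hr hu, by simp only [conjAct']; group⟩

theorem image_conj_subset (Q : Subgroup G) {x : G} (hx : x ∈ Q) :
    (fun t => t * x * t⁻¹) '' (Q : Set G) ⊆ Q := by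
  rintro _ ⟨t, ht, rfl⟩
  exact Q.mul_mem (Q.mul_mem ht hx) (Q.inv_mem ht)

theorem isTypeD_conjClass_of_subgroup (Q : Subgroup G) {x y : G} (hx : x ∈ Q) (hy : y ∈ Q)
    (hxy : IsConj x y) (hdisj : ∀ t ∈ Q, ∀ u ∈ Q, t * x * t⁻¹ ≠ u * y * u⁻¹)
    (hsq : ∃ t ∈ Q, sqD (t * x * t⁻¹) y ≠ y) :
    IsTypeD (conjClass x) := by
  obtain ⟨g, rfl⟩ := isConj_iff.1 hxy
  refine ⟨(fun t => t * x * t⁻¹) '' (Q : Set G), (fun t => t * (g * x * g⁻¹) * t⁻¹) '' (Q : Set G),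
    ?_, ?_, ⟨x, 1, Q.one_mem, by group⟩, ⟨g * x * g⁻¹, 1, Q.one_mem, by group⟩, ?_,
    fun r hr _ hr' => conjAct'_mem_image_conj Q (image_conj_subset Q hx hr) hr',
    fun s hs _ hs' => conjAct'_mem_image_conj Q (image_conj_subset Q hy hs) hs',
    fun r hr s hs => ⟨conjAct'_mem_image_conj Q (image_conj_subset Q hx hr) hs,
      conjAct'_mem_image_conj Q (image_conj_subset Q hy hs) hr⟩, ?_⟩
  · rintro _ ⟨t, -, rfl⟩
    exact ⟨t, rfl⟩
  · rintro _ ⟨t, -, rfl⟩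
    exact ⟨t * g, by group⟩
  · rw [Set.disjoint_left]
    rintro _ ⟨t, ht, rfl⟩ ⟨u, hu, h⟩
    exact hdisj t ht u hu h.symm
  · obtain ⟨t, ht, h⟩ := hsq
    exact ⟨_, ⟨t, ht, rfl⟩, _, ⟨1, Q.one_mem, by group⟩, h⟩

end TypeD

theorem Equiv.Perm.IsCycle.isConj_sq {α : Type*} [Fintype α] [DecidableEq α] {σ : Perm α}
    (hσ : σ.IsCycle) (hodd : Odd (orderOf σ)) : IsConj σ (σ ^ 2) := by
  have hcop : Nat.Coprime 2 (orderOf σ) := Nat.coprime_two_left.2 hodd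
  exact hσ.isConj (hσ.pow_iff.2 hcop) (by rw [Perm.support_pow_coprime hcop])

section PermAct

variable {n : ℕ}

theorem permAct_add (σ : Perm (Fin n)) (v w : Fin n → ZMod 2) :
    permAct σ (v + w) = permAct σ v + permAct σ w := rfl

@[simp] theorem permAct_one (v : Fin n → ZMod 2) : permAct 1 v = v := rfl

theorem permAct_permAct (σ μ : Perm (Fin n)) (v : Fin n → ZMod 2) :
    permAct σ (permAct μ v) = permAct (σ * μ) v := rfl

theorem permAct_single (σ : Perm (Fin n)) (i : Fin n) (c : ZMod 2) :
    permAct σ (Pi.single i c) = Pi.single (σ i) c := by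
  funext j
  simp only [permAct, Pi.single_apply, Perm.inv_eq_iff_eq]

end PermAct

section Defect

variable {n : ℕ}

def sqDefect (σ μ : Perm (Fin n)) (d : Fin n → ZMod 2) : Fin n → ZMod 2 :=
  d + permAct μ d + permAct (σ * μ) d + permAct (σ * μ * μ) d

theorem pow_three_apply_ne_pow_apply {τ : Perm (Fin n)} {x : Fin n}
    (hx : ∀ k, 0 < k → k < 5 → (τ ^ k) x ≠ x) {m : ℕ} (hm : m ≤ 7) (hm3 : m ≠ 3) :
    (τ ^ 3) x ≠ (τ ^ m) x := by
  rcases Nat.lt_or_gt_of_ne hm3 with h | h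
  · rw [show 3 = m + (3 - m) by omega, pow_add, Perm.mul_apply, (τ ^ m).injective.ne_iff]
    exact hx _ (by omega) (by omega)
  · rw [show m = 3 + (m - 3) by omega, pow_add, Perm.mul_apply, (τ ^ 3).injective.ne_iff]
    exact (hx _ (by omega) (by omega)).symm

theorem sqDefect_pow_two_apply {τ : Perm (Fin n)} {x : Fin n}
    (hx : ∀ k, 0 < k → k < 5 → (τ ^ k) x ≠ x) :
    sqDefect τ (τ ^ 2) (Pi.single x 1 + Pi.single ((τ ^ 2) x) 1) ((τ ^ 3) x) = 1 := by
  have hne := fun m hm hm3 => pow_three_apply_ne_pow_apply (m := m) hx hm hm3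
  simp only [sqDefect, permAct_add, permAct_single, ← Perm.mul_apply, ← pow_succ', ← pow_add,
    Pi.add_apply, Pi.single_apply]
  simp [hne, hx 3 (by norm_num) (by norm_num)]

end Defect

namespace W

variable {n : ℕ}

def permHom (n : ℕ) : W n →* Perm (Fin n) where
  toFun := W.perm
  map_one' := rfl
  map_mul' _ _ := rfl

theorem conjAct'_mk_of_commute {σ μ : Perm (Fin n)} (h : Commute σ μ) (b c : Fin n → ZMod 2) :
    conjAct' (mk b σ) (mk c μ) = mk (b + permAct σ c + permAct μ b) μ := by
  have hconj : σ * μ * σ⁻¹ = μ := by rw [h.eq, mul_inv_cancel_right]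
  ext1
  · simp only [conjAct', mul_vec, inv_vec, mul_perm, permAct_permAct, hconj,
      ZModModule.neg_eq_self]
  · exact hconj

theorem sqD_mk_of_commute {σ μ : Perm (Fin n)} (h : Commute σ μ) (b c : Fin n → ZMod 2) :
    sqD (mk b σ) (mk c μ) =
      mk (b + permAct σ (c + permAct μ (b + permAct σ c + permAct μ b) + permAct μ c)
        + permAct μ b) μ := by
  rw [sqD, conjAct'_mk_of_commute h, conjAct'_mk_of_commute (Commute.refl μ),
    conjAct'_mk_of_commute h]

theorem sqD_mk_add_vec {σ μ : Perm (Fin n)} (h : Commute σ μ) (b d c : Fin n → ZMod 2) :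
    (sqD (mk (b + d) σ) (mk c μ)).vec = (sqD (mk b σ) (mk c μ)).vec + sqDefect σ μ d := by
  simp only [sqD_mk_of_commute h, sqDefect, permAct_add, permAct_permAct, mul_assoc]
  abel

theorem sqD_ne_or_sqD_conjAct'_ne {τ : Perm (Fin n)} {x : Fin n}
    (hx : ∀ k, 0 < k → k < 5 → (τ ^ k) x ≠ x) (a c : Fin n → ZMod 2) :
    sqD (mk a τ) (mk c (τ ^ 2)) ≠ mk c (τ ^ 2) ∨
      sqD (conjAct' (mk (Pi.single x 1 + Pi.single (τ x) 1) 1) (mk a τ)) (mk c (τ ^ 2)) ≠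
        mk c (τ ^ 2) := by
  rw [← not_and_or]
  rintro ⟨h₀, h₁⟩
  have hconj : conjAct' (mk (Pi.single x 1 + Pi.single (τ x) 1) 1) (mk a τ) =
      mk (a + (Pi.single x 1 + Pi.single ((τ ^ 2) x) 1)) τ := by
    rw [conjAct'_mk_of_commute (Commute.one_left τ), permAct_one, permAct_add, permAct_single,
      permAct_single, ← Perm.mul_apply, ← pow_two, show ∀ u v w : Fin n → ZMod 2,
        u + v + a + (v + w) = a + (u + w) + (v + v) by intros; abel, ZModModule.add_self,
      add_zero]
  have hvec := congrArg vec h₁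
  rw [hconj, sqD_mk_add_vec (Commute.self_pow τ 2), h₀, add_eq_left] at hvec
  simpa [hvec] using sqDefect_pow_two_apply hx

end W

section BlockCycle

variable {n : ℕ}

theorem eq_cycleRange_of_apply [NeZero n] {p : ℕ} (hp : 0 < p) (hpn : p ≤ n) {τ : Perm (Fin n)}
    (hτ : ∀ i : Fin n, (τ i : ℕ) = if (i : ℕ) < p then ((i : ℕ) + 1) % p else (i : ℕ)) :
    τ = Fin.cycleRange ⟨p - 1, by omega⟩ := by
  ext i
  rw [hτ]
  rcases lt_trichotomy (i : ℕ) (p - 1) with h | h | h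
  · rw [Fin.coe_cycleRange_of_lt (Fin.mk_lt_mk.2 h), if_pos (by omega), Nat.mod_eq_of_lt (by omega)]
  · rw [Fin.cycleRange_of_eq (Fin.ext h), if_pos (by omega), h, Nat.sub_add_cancel hp,
      Nat.mod_self, Fin.val_zero]
  · rw [Fin.cycleRange_of_gt (Fin.mk_lt_mk.2 h), if_neg (by omega)]

theorem Fin.orderOf_cycleRange [NeZero n] {i : Fin n} (hi : i ≠ 0) :
    orderOf (Fin.cycleRange i) = i + 1 := by
  rw [← Perm.lcm_cycleType, Fin.cycleType_cycleRange hi]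
  simp

theorem Fin.val_cycleRange_pow_apply_zero [NeZero n] {i : Fin n} {k : ℕ} (hk : k ≤ i) :
    ((Fin.cycleRange i ^ k) 0 : ℕ) = k := by
  induction k with
  | zero => rfl
  | succ k ih =>
    rw [pow_succ', Perm.mul_apply, Fin.coe_cycleRange_of_lt, ih (by omega)]
    rw [Fin.lt_def, ih (by omega)]
    omega

theorem Fin.cycleRange_pow_apply_zero_ne_zero [NeZero n] {i : Fin n} {k : ℕ} (hk : 0 < k)
    (hki : k ≤ i) : (Fin.cycleRange i ^ k) 0 ≠ 0 := by
  intro h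
  have := Fin.val_cycleRange_pow_apply_zero hki
  rw [h, Fin.val_zero] at this
  omega

end BlockCycle

section Hyperoctahedral

variable {n : ℕ} {H : Subgroup (W n)}

theorem mem_of_sum_vec_eq_zero (hH : H = ⊤ ∨ H = Ksub n) {w : W n} (hw : ∑ i, w.vec i = 0) :
    w ∈ H := by
  rcases hH with rfl | rfl
  exacts [Subgroup.mem_top w, hw]

theorem exists_commute_sqD_ne (hH : H = ⊤ ∨ H = Ksub n) {τ : Perm (Fin n)} {x₀ : Fin n}
    (hx₀ : ∀ k, 0 < k → k < 5 → (τ ^ k) x₀ ≠ x₀) {x y : H} (hx : (x : W n).perm = τ)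
    (hy : (y : W n).perm = τ ^ 2) :
    ∃ t : H, Commute (t : W n).perm τ ∧ sqD (t * x * t⁻¹) y ≠ y := by
  have hxv : (x : W n) = W.mk (x : W n).vec τ := W.ext rfl hx
  have hyv : (y : W n) = W.mk (y : W n).vec (τ ^ 2) := W.ext rfl hy
  have he : W.mk (Pi.single x₀ 1 + Pi.single (τ x₀) 1) 1 ∈ H :=
    mem_of_sum_vec_eq_zero hH (by
      simp only [Pi.add_apply, Finset.sum_add_distrib, Finset.sum_pi_single', Finset.mem_univ,
        if_true]
      decide)
  rcases W.sqD_ne_or_sqD_conjAct'_ne hx₀ (x : W n).vec (y : W n).vec with h | h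
  · refine ⟨1, Commute.one_left τ, fun h' => h ?_⟩
    rw [← hxv, ← hyv]
    simpa [map_sqD] using congrArg H.subtype h'
  · refine ⟨⟨_, he⟩, Commute.one_left τ, fun h' => h ?_⟩
    rw [← hxv, ← hyv]
    simpa [map_sqD, conjAct'] using congrArg H.subtype h'

end Hyperoctahedral

/-- for odd `p ≥ 5` and `τ` the `p`-cycle `(1 2 ⋯ p)` in `S_n`
(`n ≥ p`), the conjugacy class of `(a,τ)` in `H` (where `H` is `W n` or
`K_n ⋊ S_n`) is of type D. -/
theorem typeD_pcycle (p n : ℕ) (hp : Odd p) (hp5 : 5 ≤ p) (hpn : p ≤ n)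
    (τ : Equiv.Perm (Fin n))
    (hτ : ∀ i : Fin n,
      ((τ i : ℕ)) = if (i : ℕ) < p then ((i : ℕ) + 1) % p else (i : ℕ))
    (a : Fin n → ZMod 2)
    (H : Subgroup (W n)) (hH : H = ⊤ ∨ H = Ksub n)
    (hw : W.mk a τ ∈ H) :
    IsTypeD (conjClass (⟨W.mk a τ, hw⟩ : H)) := by
  have : NeZero n := ⟨by omega⟩
  obtain rfl := eq_cycleRange_of_apply (by omega) hpn hτ
  set τ := Fin.cycleRange (⟨p - 1, by omega⟩ : Fin n)
  have hi : (⟨p - 1, by omega⟩ : Fin n) ≠ 0 := Fin.ne_of_val_ne (by simp; omega)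
  have hcyc : τ.IsCycle := Fin.isCycle_cycleRange hi
  obtain ⟨γ, hγ⟩ := isConj_iff.1 (hcyc.isConj_sq (by
    rwa [Fin.orderOf_cycleRange hi, Nat.sub_add_cancel (by omega)]))
  let f : H →* Perm (Fin n) := (W.permHom n).comp H.subtype
  let Q : Subgroup H := (Subgroup.centralizer {τ}).comap f
  have hQ : ∀ t, t ∈ Q ↔ Commute (f t) τ := fun t => Subgroup.mem_centralizer_singleton_iff
  let x : H := ⟨W.mk a τ, hw⟩
  let g : H := ⟨W.mk 0 γ, mem_of_sum_vec_eq_zero hH (by simp)⟩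
  have hfy : f (g * x * g⁻¹) = τ ^ 2 := hγ
  refine isTypeD_conjClass_of_subgroup Q ((hQ x).2 (Commute.refl τ))
    ((hQ _).2 (hfy ▸ (Commute.self_pow τ 2).symm)) (isConj_iff.2 ⟨g, rfl⟩) ?_ ?_
  · intro t ht u hu h
    have hf := congrArg f h
    rw [map_conj_of_commute f ((hQ t).1 ht),
      map_conj_of_commute f (hfy ▸ ((hQ u).1 hu).pow_right 2), hfy] at hf
    change τ = τ ^ 2 at hf
    exact hcyc.ne_one (by rwa [pow_two, left_eq_mul] at hf)
  · obtain ⟨t, ht, h⟩ := exists_commute_sqD_ne (x := x) (y := g * x * g⁻¹) hH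
      (fun k hk hk5 => Fin.cycleRange_pow_apply_zero_ne_zero hk (by simp; omega)) rfl hfy
    exact ⟨t, (hQ t).2 ht, h⟩
end

section
/- Let n > 4 and let τ ∈ S_n have cycle type (1^{n-2}, 2) (a single transposition). Let a ∈ (ℤ/2)^n and suppose there exist i, j with τ(i) = i, τ(j) = j and a_i ≠ a_j. Let H be either W_n or the subgroup K_n ⋊ S_n, and suppose (a,τ) ∈ H. Then the conjugacy class of (a,τ) in H is of type D. -/
/-! On the elements of the class whose permutation fixes `i`, the coordinate at `i` is invariant
under their mutual conjugation, so splitting them by that coordinate gives blocks `R ∋ (a,τ)` and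
`S` with the required closure properties. With `τ = (p q)` and a fifth point `k`, conjugating
`(a,τ)` by `(0,σ)`, `σ = (q k)(i j)`, gives an element of `S` with permutation `(p k)`, and
`sq((p q),(p k)) = (p q) ≠ (p k)`. As `(0,σ) ∈ K_n ⋊ S_n`, this works for both choices of `H`. -/

section TypeD

variable {G : Type*} [Group G]

theorem mem_conjClass_self (x : G) : x ∈ conjClass x :=
  ⟨1, by simp⟩

theorem conjAct'_mem_conjClass {x₀ y : G} (x : G) (hy : y ∈ conjClass x₀) :
    conjAct' x y ∈ conjClass x₀ := by
  obtain ⟨t, rfl⟩ := hy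
  exact ⟨x * t, by simp only [conjAct', mul_inv_rev, mul_assoc]⟩

theorem isTypeD_of_conjInvariant {X : Type*} {O Q : Set G} (hQO : Q ⊆ O)
    (hQ : ∀ x ∈ Q, ∀ y ∈ Q, conjAct' x y ∈ Q) (f : G → X)
    (hf : ∀ x ∈ Q, ∀ y ∈ Q, f (conjAct' x y) = f y) {r s : G} (hr : r ∈ Q) (hs : s ∈ Q)
    (hfrs : f r ≠ f s) (hsq : sqD r s ≠ s) : IsTypeD O := by
  have block : ∀ u : X, ∀ x ∈ Q ∩ f ⁻¹' {u}, ∀ y ∈ Q, conjAct' y x ∈ Q ∩ f ⁻¹' {u} :=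
    fun u x hx y hy => ⟨hQ y hy x hx.1, (hf y hy x hx.1).trans hx.2⟩
  refine ⟨Q ∩ f ⁻¹' {f r}, Q ∩ f ⁻¹' {f s}, fun x hx => hQO hx.1, fun x hx => hQO hx.1,
    ⟨r, hr, rfl⟩, ⟨s, hs, rfl⟩, ?_, fun x hx y hy => block _ y hy x hx.1,
    fun x hx y hy => block _ y hy x hx.1,
    fun x hx y hy => ⟨block _ y hy x hx.1, block _ x hx y hy.1⟩, ⟨r, ⟨hr, rfl⟩, s, ⟨hs, rfl⟩, hsq⟩⟩
  rw [Set.disjoint_left]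
  rintro x ⟨-, hxr⟩ ⟨-, hxs⟩
  exact hfrs (hxr.symm.trans hxs)

end TypeD

section Swap

open Equiv

variable {α : Type*} [DecidableEq α]

theorem sqD_swap_swap {p q k : α} (hpq : p ≠ q) (hpk : p ≠ k) (hqk : q ≠ k) :
    sqD (swap p q) (swap p k) = swap p q := by
  have conj_swap : ∀ (f : Perm α) (x y : α), conjAct' f (swap x y) = swap (f x) (f y) :=
    fun f x y => (swap_apply_apply f x y).symm
  rw [sqD, conj_swap, swap_apply_left, swap_apply_of_ne_of_ne hpk.symm hqk.symm, conj_swap,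
    swap_apply_of_ne_of_ne hpq.symm hqk, swap_apply_right, conj_swap, swap_apply_right,
    swap_apply_left]

theorem ne_and_ne_of_swap_apply_eq {p q x : α} (hpq : p ≠ q) (h : swap p q x = x) :
    x ≠ p ∧ x ≠ q :=
  not_or.mp fun hx => swap_apply_ne_self_iff.mpr ⟨hpq, hx⟩ h

theorem exists_perm_conj_swap_eq_and_inv_apply {p q k i j : α} (hpq : p ≠ q) (hpk : p ≠ k)
    (hip : i ≠ p) (hiq : i ≠ q) (hik : i ≠ k) (hjp : j ≠ p) (hjq : j ≠ q) :
    ∃ σ : Perm α, σ * swap p q * σ⁻¹ = swap p k ∧ σ⁻¹ i = j := by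
  refine ⟨swap q k * swap i j, ?_, ?_⟩
  · rw [← swap_apply_apply, Perm.mul_apply, Perm.mul_apply,
      swap_apply_of_ne_of_ne hip.symm hjp.symm, swap_apply_of_ne_of_ne hpq hpk,
      swap_apply_of_ne_of_ne hiq.symm hjq.symm, swap_apply_left]
  · rw [Perm.inv_eq_iff_eq, Perm.mul_apply, swap_apply_right, swap_apply_of_ne_of_ne hiq hik]

end Swap

theorem Fin.exists_ne_of_four_lt {n : ℕ} (hn : 4 < n) (p q i j : Fin n) :
    ∃ k, p ≠ k ∧ q ≠ k ∧ i ≠ k ∧ j ≠ k := by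
  classical
  obtain ⟨k, -, hk⟩ := Finset.exists_mem_notMem_of_card_lt_card
    (s := {p, q, i, j}) (t := Finset.univ) (by simpa using Finset.card_le_four.trans_lt hn)
  simp only [Finset.mem_insert, Finset.mem_singleton, not_or] at hk
  exact ⟨k, Ne.symm hk.1, Ne.symm hk.2.1, Ne.symm hk.2.2.1, Ne.symm hk.2.2.2⟩

namespace W

variable {n : ℕ}

theorem conj_perm (x y : W n) : (x * y * x⁻¹).perm = x.perm * y.perm * x.perm⁻¹ := rfl

theorem conj_perm_apply_of_apply_eq {x y : W n} {ℓ : Fin n} (hx : x.perm ℓ = ℓ)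
    (hy : y.perm ℓ = ℓ) : (x * y * x⁻¹).perm ℓ = ℓ := by
  rw [conj_perm, Equiv.Perm.mul_apply, Equiv.Perm.mul_apply,
    Equiv.Perm.inv_eq_iff_eq.mpr hx.symm, hy, hx]

theorem conj_vec_apply_of_apply_eq {x y : W n} {ℓ : Fin n} (hx : x.perm ℓ = ℓ)
    (hy : y.perm ℓ = ℓ) : (x * y * x⁻¹).vec ℓ = y.vec ℓ := by
  have hx' : x.perm⁻¹ ℓ = ℓ := Equiv.Perm.inv_eq_iff_eq.mpr hx.symm
  have hy' : y.perm⁻¹ ℓ = ℓ := Equiv.Perm.inv_eq_iff_eq.mpr hy.symm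
  simp only [mul_vec, inv_vec, mul_perm, permAct, Pi.add_apply, Pi.neg_apply, mul_inv_rev,
    Equiv.Perm.mul_apply, inv_inv, hx, hx', hy']
  abel

theorem mk_zero_conj (σ τ : Equiv.Perm (Fin n)) (a : Fin n → ZMod 2) :
    mk 0 σ * mk a τ * (mk 0 σ)⁻¹ = mk (permAct σ a) (σ * τ * σ⁻¹) := by
  ext i <;> simp [permAct]

theorem mk_zero_mem_Ksub (σ : Equiv.Perm (Fin n)) : mk 0 σ ∈ Ksub n := by
  show ∑ i, (0 : Fin n → ZMod 2) i = 0
  simp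

theorem sqD_ne_self_of_perm {H : Subgroup (W n)} {x y : H}
    (h : sqD (x : W n).perm (y : W n).perm ≠ (y : W n).perm) : sqD x y ≠ y :=
  fun e => h (congrArg (fun z : H => (z : W n).perm) e)

end W

/-- for `n > 4` and `τ ∈ S_n` a single transposition (cycle type
`(1^{n-2},2)`), if `a_i ≠ a_j` for some fixed points `i, j` of `τ`, then the
conjugacy class of `(a,τ)` in `H` (where `H` is `W n` or `K_n ⋊ S_n`) is of
type D. -/
theorem typeD_transposition (n : ℕ) (hn : 4 < n) (τ : Equiv.Perm (Fin n))
    (hτ : τ.cycleType = {2})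
    (a : Fin n → ZMod 2)
    (hij : ∃ i j : Fin n, τ i = i ∧ τ j = j ∧ a i ≠ a j)
    (H : Subgroup (W n)) (hH : H = ⊤ ∨ H = Ksub n)
    (hw : W.mk a τ ∈ H) :
    IsTypeD (conjClass (⟨W.mk a τ, hw⟩ : H)) := by
  obtain ⟨i, j, hi, hj, haij⟩ := hij
  obtain ⟨p, q, hpq, rfl⟩ := Equiv.Perm.isSwap_iff_cycleType.mpr hτ
  obtain ⟨hip, hiq⟩ := ne_and_ne_of_swap_apply_eq hpq hi
  obtain ⟨hjp, hjq⟩ := ne_and_ne_of_swap_apply_eq hpq hj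
  obtain ⟨k, hpk, hqk, hik, -⟩ := Fin.exists_ne_of_four_lt hn p q i j
  obtain ⟨σ, hσ, hσi⟩ := exists_perm_conj_swap_eq_and_inv_apply hpq hpk hip hiq hik hjp hjq
  have hg : W.mk 0 σ ∈ H := by
    rcases hH with rfl | rfl
    exacts [Subgroup.mem_top _, W.mk_zero_mem_Ksub σ]
  set r : H := ⟨_, hw⟩
  set g : H := ⟨_, hg⟩
  have hs : ((g * r * g⁻¹ : H) : W n) = W.mk (permAct σ a) (Equiv.swap p k) := by
    rw [← hσ]; exact W.mk_zero_conj σ _ a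
  refine isTypeD_of_conjInvariant (Q := conjClass r ∩ {x | (x : W n).perm i = i})
    Set.inter_subset_left ?_ (fun x => (x : W n).vec i) ?_ (r := r) (s := g * r * g⁻¹)
    ⟨mem_conjClass_self r, hi⟩ ⟨⟨g, rfl⟩, ?_⟩ ?_ (W.sqD_ne_self_of_perm ?_)
  · exact fun x hx y hy =>
      ⟨conjAct'_mem_conjClass x hy.1, W.conj_perm_apply_of_apply_eq hx.2 hy.2⟩
  · exact fun x hx y hy => W.conj_vec_apply_of_apply_eq hx.2 hy.2
  · rw [Set.mem_ofPred_eq, hs]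
    exact Equiv.swap_apply_of_ne_of_ne hip hik
  · simpa [hs, permAct, hσi] using haij
  · rw [hs]
    change sqD (Equiv.swap p q) (Equiv.swap p k) ≠ _
    rw [sqD_swap_swap hpq hpk hqk]
    exact fun e => hqk (by simpa using congrArg (· p) e)
end
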